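/- arXiv:2510.07013 — 2 statements merged into one kernel-verified Lean document; each statement's English description precedes it below -/
import Mathlib

section
/- Let E be a non-empty metric space with quasi-Assouad dimension α < ∞, and suppose its two-scale branching function satisfies β_E(u,v) = ψ(u,v) + o(u) for some ψ ∈ 𝓑(α). Then for every 0 ≤ θ < 1, the upper Assouad spectrum equals the supremum of the Assouad spectrum: dim_A^{≤θ} E = sup_{0 ≤ λ ≤ θ} dim_A^{λ} E, where dim_A^{λ} E = limsup_{u→∞} β_E(u,λu)/(u(1−λ)) and dim_A^{≤θ} E = limsup_{u→∞} sup_{0 ≤ λ ≤ θ} β_E(u,λu)/(u(1−λ)). -/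
open Set Filter
open scoped ENNReal

/-- The least number of open balls of radius `r` needed to cover `F`, valued in `[0,∞]`. -/
noncomputable def covN (X : Type*) [MetricSpace X] (r : ℝ) (F : Set X) : ℝ≥0∞ :=
  sInf {n : ℝ≥0∞ | ∃ s : Finset X, (s.card : ℝ≥0∞) = n ∧ F ⊆ ⋃ x ∈ s, Metric.ball x r}

/-- Logarithm base 2, valued in `[0,∞]`. -/
noncomputable def log2e (x : ℝ≥0∞) : ℝ≥0∞ :=
  if x = ∞ then ∞ else ENNReal.ofReal (Real.logb 2 x.toReal)

/-- The two-scale branching function `β_E(u,v) = log₂ sup_{x∈E} N_{2^{-u}}(B(x,2^{-v}))`. -/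
noncomputable def beta2 (X : Type*) [MetricSpace X] (u v : ℝ) : ℝ≥0∞ :=
  log2e (⨆ x : X, covN X ((2 : ℝ) ^ (-u)) (Metric.ball x ((2 : ℝ) ^ (-v))))

/-- The quantity whose limit as `θ ↗ 1` is the quasi-Assouad dimension:
`inf {s ≥ 0 : ∃ C > 0, ∀ 0 < r ≤ r^θ ≤ R < 1, sup_x N_r(B(x,R)) ≤ C (R/r)^s}`. -/
noncomputable def qaAt (X : Type*) [MetricSpace X] (θ : ℝ) : ℝ :=
  sInf {s : ℝ | 0 ≤ s ∧ ∃ C : ℝ, 0 < C ∧ ∀ r R : ℝ, 0 < r → r ≤ r ^ θ → r ^ θ ≤ R → R < 1 →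
    ∀ x : X, covN X r (Metric.ball x R) ≤ ENNReal.ofReal (C * (R / r) ^ s)}

/-- The real-valued two-scale branching function. -/
noncomputable def betaR (X : Type*) [MetricSpace X] (u v : ℝ) : ℝ :=
  (beta2 X u v).toReal

/-- The space `𝓑`: nonnegative functions on `Δ` with `ψ(u,u)=0`, subadditive, increasing in
the first variable and decreasing in the second. -/
def MemB (ψ : ℝ → ℝ → ℝ) : Prop :=
  (∀ u, 0 ≤ u → ψ u u = 0) ∧
  (∀ u v, 0 ≤ v → v ≤ u → 0 ≤ ψ u v) ∧
  (∀ u w v, 0 ≤ v → v ≤ w → w ≤ u → ψ u v ≤ ψ u w + ψ w v) ∧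
  (∀ u w v, 0 ≤ v → v ≤ w → w ≤ u → ψ w v ≤ ψ u v) ∧
  (∀ u w v, 0 ≤ v → v ≤ w → w ≤ u → ψ u w ≤ ψ u v)

/-- The space `𝓑(α)`: `α`-Lipschitz members of `𝓑` (for the `L¹` metric on `Δ`). -/
def MemBLip (α : ℝ) (ψ : ℝ → ℝ → ℝ) : Prop :=
  MemB ψ ∧ ∀ u v u' v', 0 ≤ v → v ≤ u → 0 ≤ v' → v' ≤ u' →
    |ψ u v - ψ u' v'| ≤ α * (|u - u'| + |v - v'|)

lemma aux_div_bound (A B a b m DAB Dab MM : ℝ) (hm : 0 < m) (ha : m ≤ a) (hb : m ≤ b)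
    (hB0 : 0 ≤ B) (hBM : B ≤ MM) (hAB : |A - B| ≤ DAB) (hab : |a - b| ≤ Dab) :
    |A / a - B / b| ≤ DAB / m + MM * Dab / (m * m) := by
  have ha0 : 0 < a := hm.trans_le ha
  have hb0 : 0 < b := hm.trans_le hb
  have hMM : 0 ≤ MM := hB0.trans hBM
  have hDAB : 0 ≤ DAB := (abs_nonneg _).trans hAB
  have hDab : 0 ≤ Dab := (abs_nonneg _).trans hab
  have hkey : A / a - B / b = (A - B) / a + B * (b - a) / (a * b) := by
    field_simp
    ring
  rw [hkey]
  have h1 : |(A - B) / a| ≤ DAB / m := by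
    rw [abs_div, abs_of_pos ha0]
    exact div_le_div₀ hDAB hAB hm ha
  have h2 : |B * (b - a) / (a * b)| ≤ MM * Dab / (m * m) := by
    rw [abs_div, abs_mul, abs_of_nonneg hB0, abs_of_pos (mul_pos ha0 hb0)]
    refine div_le_div₀ (mul_nonneg hMM hDab) ?_ (mul_pos hm hm) ?_
    · exact mul_le_mul hBM (by rwa [abs_sub_comm]) (abs_nonneg _) hMM
    · exact mul_le_mul ha hb hm.le ha0.le
  calc |(A - B) / a + B * (b - a) / (a * b)|
      ≤ |(A - B) / a| + |B * (b - a) / (a * b)| := abs_add_le _ _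
    _ ≤ DAB / m + MM * Dab / (m * m) := add_le_add h1 h2

set_option maxHeartbeats 2000000 in
/-- If `E` has quasi-Assouad dimension `α < ∞` and `β_E = ψ + o(u)` for some `ψ ∈ 𝓑(α)`,
then for `0 ≤ θ < 1` the upper Assouad spectrum
`dim_A^{≤θ} E = limsup_u sup_{0≤λ≤θ} β_E(u,λu)/(u(1-λ))` equals
`sup_{0≤λ≤θ} dim_A^{λ} E` where `dim_A^{λ} E = limsup_u β_E(u,λu)/(u(1-λ))`. -/
theorem upper_spectrum_eq_sup_spectrum (X : Type*) [MetricSpace X] [Nonempty X]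
    (α : ℝ) (hα : 0 ≤ α)
    (hqA : Filter.Tendsto (fun θ => qaAt X θ) (nhdsWithin 1 (Set.Iio 1)) (nhds α))
    (ψ : ℝ → ℝ → ℝ) (hψ : MemBLip α ψ)
    (η : ℝ → ℝ) (hη : Filter.Tendsto (fun u => η u / u) Filter.atTop (nhds 0))
    (happrox : ∀ u v : ℝ, 0 ≤ v → v ≤ u → |betaR X u v - ψ u v| ≤ η u) :
    ∀ θ : ℝ, 0 ≤ θ → θ < 1 →
      Filter.limsup
          (fun u => sSup ((fun l => betaR X u (l * u) / (u * (1 - l))) '' Set.Icc 0 θ))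
          Filter.atTop
        = sSup ((fun l => Filter.limsup (fun u => betaR X u (l * u) / (u * (1 - l)))
            Filter.atTop) '' Set.Icc 0 θ) := by
  obtain ⟨⟨hψ00, hψnn, hψsub, hψmono, hψdec⟩, hψlip⟩ := hψ
  intro θ hθ0 hθ1
  have ht : 0 < 1 - θ := by linarith
  -- ψ is bounded by α u
  have hψ0 : ∀ u : ℝ, 0 ≤ u → ∀ v : ℝ, 0 ≤ v → v ≤ u → ψ u v ≤ α * u := by
    intro u hu v hv hvu
    have h1 : ψ u v ≤ ψ u 0 := hψdec u v 0 le_rfl hv hvu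
    have h2 := hψlip u 0 0 0 le_rfl hu le_rfl le_rfl
    rw [hψ00 0 le_rfl] at h2
    simp only [sub_zero, abs_zero, add_zero] at h2
    rw [abs_of_nonneg hu] at h2
    have := le_abs_self (ψ u 0)
    linarith
  have hb_nonneg : ∀ u v : ℝ, 0 ≤ betaR X u v := fun u v => ENNReal.toReal_nonneg
  -- betaR upper bound
  have hb_ub : ∀ u : ℝ, 0 < u → ∀ l ∈ Icc (0:ℝ) θ, betaR X u (l * u) ≤ α * u + η u := by
    intro u hu l hl
    have hl0 : 0 ≤ l * u := mul_nonneg hl.1 hu.le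
    have hlu : l * u ≤ u := by nlinarith [hl.2]
    have h := (abs_le.mp (happrox u (l * u) hl0 hlu)).2
    have h2 := hψ0 u hu.le (l * u) hl0 hlu
    linarith
  obtain ⟨M, hMdef⟩ : ∃ M : ℝ, M = (α + 1) / (1 - θ) := ⟨_, rfl⟩
  have hM0 : 0 ≤ M := by rw [hMdef]; exact div_nonneg (by linarith) ht.le
  -- pointwise upper bound for g
  have hg_ub : ∀ u : ℝ, 1 ≤ u → η u / u < 1 → ∀ l ∈ Icc (0:ℝ) θ,
      betaR X u (l * u) / (u * (1 - l)) ≤ M := by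
    intro u hu hηu l hl
    have hu0 : 0 < u := lt_of_lt_of_le one_pos hu
    have hηu' : η u ≤ u := by
      have := (div_lt_iff₀ hu0).mp hηu; linarith
    have h1 : betaR X u (l * u) ≤ (α + 1) * u := by
      have := hb_ub u hu0 l hl; nlinarith
    have hden : 0 < u * (1 - θ) := mul_pos hu0 ht
    have hden2 : u * (1 - θ) ≤ u * (1 - l) := by nlinarith [hl.2]
    calc betaR X u (l * u) / (u * (1 - l)) ≤ ((α + 1) * u) / (u * (1 - θ)) :=
          div_le_div₀ (by positivity) h1 hden hden2
      _ = M := by rw [hMdef, mul_comm (α + 1) u, mul_div_mul_left _ _ (ne_of_gt hu0)]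
  have hg_nn : ∀ u : ℝ, 0 < u → ∀ l ∈ Icc (0:ℝ) θ,
      0 ≤ betaR X u (l * u) / (u * (1 - l)) := by
    intro u hu l hl
    exact div_nonneg (hb_nonneg _ _) (by nlinarith [hl.2])
  have hIcc : (Icc (0:ℝ) θ).Nonempty := nonempty_Icc.mpr hθ0
  have hev1 : ∀ᶠ u : ℝ in atTop, 1 ≤ u ∧ η u / u < 1 :=
    (eventually_ge_atTop 1).and (hη.eventually (gt_mem_nhds one_pos))
  -- BddAbove of the inner image, eventually
  have hbdd : ∀ u : ℝ, 1 ≤ u → η u / u < 1 →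
      BddAbove ((fun l => betaR X u (l * u) / (u * (1 - l))) '' Icc 0 θ) := by
    intro u hu hηu
    refine ⟨M, ?_⟩
    rintro y ⟨l, hl, rfl⟩
    exact hg_ub u hu hηu l hl
  -- S bounds, eventually
  have hS_ub : ∀ᶠ u : ℝ in atTop,
      sSup ((fun l => betaR X u (l * u) / (u * (1 - l))) '' Icc 0 θ) ≤ M := by
    filter_upwards [hev1] with u hu
    exact csSup_le (hIcc.image _) (by rintro y ⟨l, hl, rfl⟩; exact hg_ub u hu.1 hu.2 l hl)
  have hS_lb : ∀ᶠ u : ℝ in atTop,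
      0 ≤ sSup ((fun l => betaR X u (l * u) / (u * (1 - l))) '' Icc 0 θ) := by
    filter_upwards [hev1] with u hu
    have hu0 : (0:ℝ) < u := lt_of_lt_of_le one_pos hu.1
    have h0 : (0:ℝ) ∈ Icc (0:ℝ) θ := ⟨le_rfl, hθ0⟩
    exact le_trans (hg_nn u hu0 0 h0)
      (le_csSup (hbdd u hu.1 hu.2) (mem_image_of_mem _ h0))
  have hSbound : IsBoundedUnder (· ≤ ·) atTop
      (fun u => sSup ((fun l => betaR X u (l * u) / (u * (1 - l))) '' Icc 0 θ)) :=
    ⟨M, eventually_map.mpr hS_ub⟩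
  have hScobound : IsCoboundedUnder (· ≤ ·) atTop
      (fun u => sSup ((fun l => betaR X u (l * u) / (u * (1 - l))) '' Icc 0 θ)) :=
    IsBoundedUnder.isCoboundedUnder_le ⟨0, eventually_map.mpr hS_lb⟩
  have hgbound : ∀ l ∈ Icc (0:ℝ) θ, IsBoundedUnder (· ≤ ·) atTop
      (fun u => betaR X u (l * u) / (u * (1 - l))) := by
    intro l hl
    refine ⟨M, eventually_map.mpr ?_⟩
    filter_upwards [hev1] with u hu
    exact hg_ub u hu.1 hu.2 l hl
  have hgcobound : ∀ l ∈ Icc (0:ℝ) θ, IsCoboundedUnder (· ≤ ·) atTop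
      (fun u => betaR X u (l * u) / (u * (1 - l))) := by
    intro l hl
    refine IsBoundedUnder.isCoboundedUnder_le ⟨0, eventually_map.mpr ?_⟩
    filter_upwards [hev1] with u hu
    exact hg_nn u (lt_of_lt_of_le one_pos hu.1) l hl
  -- L bounds
  have hL_ub : ∀ l ∈ Icc (0:ℝ) θ,
      limsup (fun u => betaR X u (l * u) / (u * (1 - l))) atTop ≤ M := by
    intro l hl
    refine limsup_le_of_le (hgcobound l hl) ?_
    filter_upwards [hev1] with u hu
    exact hg_ub u hu.1 hu.2 l hl
  have hLbdd : BddAbove ((fun l => limsup (fun u => betaR X u (l * u) / (u * (1 - l)))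
      atTop) '' Icc 0 θ) := by
    refine ⟨M, ?_⟩
    rintro y ⟨l, hl, rfl⟩
    exact hL_ub l hl
  refine le_antisymm ?_ ?_
  · -- limsup sSup ≤ sSup limsup : the hard direction
    refine le_of_forall_pos_le_add (fun ε hε => ?_)
    set RHS := sSup ((fun l => limsup (fun u => betaR X u (l * u) / (u * (1 - l)))
        atTop) '' Icc 0 θ) with hRHSdef
    obtain ⟨δ, hδ0, hδbound⟩ : ∃ δ : ℝ, 0 < δ ∧
        α * δ / (1 - θ) + (α + 1) * δ / ((1 - θ) * (1 - θ)) ≤ ε / 4 := by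
      have hK0 : 0 ≤ α / (1 - θ) + (α + 1) / ((1 - θ) * (1 - θ)) :=
        add_nonneg (div_nonneg hα ht.le) (div_nonneg (by linarith) (by positivity))
      refine ⟨ε / 4 / (α / (1 - θ) + (α + 1) / ((1 - θ) * (1 - θ)) + 1),
        div_pos (by linarith) (by linarith), ?_⟩
      have hK1 : (0:ℝ) < α / (1 - θ) + (α + 1) / ((1 - θ) * (1 - θ)) + 1 := by linarith
      have heq : ∀ K d : ℝ, α * d / (1 - θ) + (α + 1) * d / ((1 - θ) * (1 - θ))
          = (α / (1 - θ) + (α + 1) / ((1 - θ) * (1 - θ))) * d := by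
        intro K d; field_simp
      rw [heq 0]
      set K := α / (1 - θ) + (α + 1) / ((1 - θ) * (1 - θ)) with hK
      have h1 : K * (ε / 4 / (K + 1)) ≤ (K + 1) * (ε / 4 / (K + 1)) := by
        apply mul_le_mul_of_nonneg_right (by linarith)
        exact le_of_lt (div_pos (by linarith) hK1)
      have hKne : K + 1 ≠ 0 := ne_of_gt hK1
      have h2 : (K + 1) * (ε / 4 / (K + 1)) = ε / 4 := by
        rw [mul_comm]
        exact div_mul_cancel₀ _ hKne
      linarith
    obtain ⟨τ, hτ0, hτ1, hτ2⟩ : ∃ τ : ℝ, 0 < τ ∧ τ ≤ 1 ∧ τ ≤ ε * (1 - θ) / 8 :=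
      ⟨min 1 (ε * (1 - θ) / 8), lt_min one_pos (by positivity), min_le_left _ _,
        min_le_right _ _⟩
    obtain ⟨n, hndef⟩ : ∃ n : ℕ, n = ⌈θ / δ⌉₊ := ⟨_, rfl⟩
    obtain ⟨p, hpdef⟩ : ∃ p : ℕ → ℝ, ∀ i : ℕ, p i = min ((i : ℝ) * δ) θ :=
      ⟨_, fun _ => rfl⟩
    have hp_mem : ∀ i : ℕ, p i ∈ Icc (0:ℝ) θ := by
      intro i
      rw [hpdef]
      exact ⟨le_min (by positivity) hθ0, min_le_right _ _⟩
    -- equicontinuity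
    have hEq : ∀ u : ℝ, 1 ≤ u → η u / u < τ → ∀ lam ∈ Icc (0:ℝ) θ, ∀ mu ∈ Icc (0:ℝ) θ,
        |lam - mu| ≤ δ →
        betaR X u (lam * u) / (u * (1 - lam)) ≤ betaR X u (mu * u) / (u * (1 - mu)) + ε / 2 := by
      intro u hu hηu lam hlam mu hmu hd
      have hu0 : 0 < u := lt_of_lt_of_le one_pos hu
      have hηu' : η u ≤ τ * u := by
        have := (div_lt_iff₀ hu0).mp hηu; linarith
      have hA : betaR X u (lam * u) / (u * (1 - lam))
          = (betaR X u (lam * u) / u) / (1 - lam) := by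
        rw [div_div]
      have hB : betaR X u (mu * u) / (u * (1 - mu))
          = (betaR X u (mu * u) / u) / (1 - mu) := by
        rw [div_div]
      have hlam0 : 0 ≤ lam * u := mul_nonneg hlam.1 hu0.le
      have hlamu : lam * u ≤ u := by nlinarith [hlam.2]
      have hmu0 : 0 ≤ mu * u := mul_nonneg hmu.1 hu0.le
      have hmuu : mu * u ≤ u := by nlinarith [hmu.2]
      have hBM : betaR X u (mu * u) / u ≤ α + τ := by
        rw [div_le_iff₀ hu0]
        have := hb_ub u hu0 mu hmu
        nlinarith
      have hAB : |betaR X u (lam * u) / u - betaR X u (mu * u) / u| ≤ α * δ + 2 * τ := by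
        have e1 := happrox u (lam * u) hlam0 hlamu
        have e2 := happrox u (mu * u) hmu0 hmuu
        have e3 : |ψ u (lam * u) - ψ u (mu * u)| ≤ α * (δ * u) := by
          have := hψlip u (lam * u) u (mu * u) hlam0 hlamu hmu0 hmuu
          simp only [sub_self, abs_zero, zero_add] at this
          calc |ψ u (lam * u) - ψ u (mu * u)| ≤ α * |lam * u - mu * u| := this
            _ ≤ α * (δ * u) := by
                refine mul_le_mul_of_nonneg_left ?_ hα
                rw [← sub_mul, abs_mul, abs_of_pos hu0]
                exact mul_le_mul_of_nonneg_right hd hu0.le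
        have e4 : |betaR X u (lam * u) - betaR X u (mu * u)| ≤ α * (δ * u) + 2 * η u := by
          calc |betaR X u (lam * u) - betaR X u (mu * u)|
              = |(betaR X u (lam * u) - ψ u (lam * u)) + (ψ u (lam * u) - ψ u (mu * u))
                + (ψ u (mu * u) - betaR X u (mu * u))| := by ring_nf
            _ ≤ |betaR X u (lam * u) - ψ u (lam * u)| + |ψ u (lam * u) - ψ u (mu * u)|
                + |ψ u (mu * u) - betaR X u (mu * u)| := abs_add_three _ _ _
            _ ≤ η u + α * (δ * u) + η u := by
                refine add_le_add (add_le_add e1 e3) ?_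
                rw [abs_sub_comm]; exact e2
            _ = α * (δ * u) + 2 * η u := by ring
        rw [div_sub_div_same, abs_div, abs_of_pos hu0]
        rw [div_le_iff₀ hu0]
        calc |betaR X u (lam * u) - betaR X u (mu * u)| ≤ α * (δ * u) + 2 * η u := e4
          _ ≤ α * (δ * u) + 2 * (τ * u) := by linarith
          _ = (α * δ + 2 * τ) * u := by ring
      have hab : |(1 - lam) - (1 - mu)| ≤ δ := by
        rw [show (1 - lam) - (1 - mu) = -(lam - mu) by ring, abs_neg]
        exact hd
      have hmain := aux_div_bound (betaR X u (lam * u) / u) (betaR X u (mu * u) / u)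
        (1 - lam) (1 - mu) (1 - θ) (α * δ + 2 * τ) δ (α + τ) ht
        (by linarith [hlam.2]) (by linarith [hmu.2])
        (div_nonneg (hb_nonneg _ _) hu0.le) hBM hAB hab
      have hbound : (α * δ + 2 * τ) / (1 - θ) + (α + τ) * δ / ((1 - θ) * (1 - θ)) ≤ ε / 2 := by
        have hτt : 2 * τ / (1 - θ) ≤ ε / 4 := by
          rw [div_le_iff₀ ht]
          linarith
        have hsplit : (α * δ + 2 * τ) / (1 - θ) + (α + τ) * δ / ((1 - θ) * (1 - θ))
            ≤ α * δ / (1 - θ) + 2 * τ / (1 - θ) + (α + 1) * δ / ((1 - θ) * (1 - θ)) := by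
          have h1 : (α * δ + 2 * τ) / (1 - θ) = α * δ / (1 - θ) + 2 * τ / (1 - θ) := by
            rw [add_div]
          rw [h1]
          have h2 : (α + τ) * δ / ((1 - θ) * (1 - θ)) ≤ (α + 1) * δ / ((1 - θ) * (1 - θ)) := by
            apply div_le_div_of_nonneg_right ?_ (by positivity)
            · exact mul_le_mul_of_nonneg_right (by linarith) hδ0.le
          linarith
        linarith
      have : |betaR X u (lam * u) / u / (1 - lam) - betaR X u (mu * u) / u / (1 - mu)|
          ≤ ε / 2 := le_trans hmain hbound
      rw [hA, hB]
      have := (abs_le.mp this).2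
      linarith
    -- the finitely many sample points are eventually below RHS + ε/4
    have hevA : ∀ᶠ u : ℝ in atTop, ∀ i ∈ Finset.range (n + 1),
        betaR X u (p i * u) / (u * (1 - p i)) < RHS + ε / 4 := by
      rw [eventually_all_finset]
      intro i _
      have hLp : limsup (fun u => betaR X u (p i * u) / (u * (1 - p i))) atTop ≤ RHS :=
        le_csSup hLbdd (mem_image_of_mem _ (hp_mem i))
      exact eventually_lt_of_limsup_lt (lt_of_le_of_lt hLp (by linarith))
        (hgbound (p i) (hp_mem i))
    have hevτ : ∀ᶠ u : ℝ in atTop, η u / u < τ := hη.eventually (gt_mem_nhds hτ0)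
    refine limsup_le_of_le hScobound ?_
    filter_upwards [hevA, hevτ, eventually_ge_atTop (1:ℝ)] with u hA hτu hu1
    have hu0 : (0:ℝ) < u := lt_of_lt_of_le one_pos hu1
    have hηu1 : η u / u < 1 := lt_of_lt_of_le hτu hτ1
    refine csSup_le (hIcc.image _) ?_
    rintro y ⟨lam, hlam, rfl⟩
    -- find sample point
    obtain ⟨i, hidef⟩ : ∃ i : ℕ, i = ⌊lam / δ⌋₊ := ⟨_, rfl⟩
    have hi_le : (i : ℝ) * δ ≤ lam := by
      rw [hidef]
      rw [← le_div_iff₀ hδ0]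
      exact Nat.floor_le (div_nonneg hlam.1 hδ0.le)
    have hi_lt : lam < ((i : ℝ) + 1) * δ := by
      rw [hidef, ← div_lt_iff₀ hδ0]
      exact_mod_cast Nat.lt_floor_add_one (lam / δ)
    have hi_n : i ≤ n := by
      rw [hidef, hndef]
      calc ⌊lam / δ⌋₊ ≤ ⌊θ / δ⌋₊ :=
            Nat.floor_mono (div_le_div_of_nonneg_right hlam.2 hδ0.le)
        _ ≤ ⌈θ / δ⌉₊ := Nat.floor_le_ceil _
    have hpi : p i = (i : ℝ) * δ := by
      rw [hpdef]
      exact min_eq_left (le_trans hi_le hlam.2)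
    have hdist : |lam - p i| ≤ δ := by
      rw [hpi, abs_of_nonneg (by linarith)]
      linarith
    have h1 : betaR X u (lam * u) / (u * (1 - lam))
        ≤ betaR X u (p i * u) / (u * (1 - p i)) + ε / 2 :=
      hEq u hu1 hτu lam hlam (p i) (hp_mem i) hdist
    have h2 : betaR X u (p i * u) / (u * (1 - p i)) < RHS + ε / 4 :=
      hA i (Finset.mem_range.mpr (Nat.lt_succ_of_le hi_n))
    linarith
  · -- sSup limsup ≤ limsup sSup : the easy direction
    refine csSup_le (hIcc.image _) ?_
    rintro y ⟨l, hl, rfl⟩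
    refine limsup_le_limsup ?_ (hgcobound l hl) hSbound
    filter_upwards [hev1] with u hu
    exact le_csSup (hbdd u hu.1 hu.2) (mem_image_of_mem _ hl)
end

section
/- Let 0 ≤ h ≤ α. For every ψ ∈ 𝓑(α), Γ(Φ_h(ψ)) = Ω_h(Γ(ψ)); that is, the projection Φ_h on two-scale branching functions commutes with the normalized limit Γ and the projection Ω_h on spectra, so the diagram 𝓑(α) → 𝓑̄_h(α) → 𝓖̄_h(α) and 𝓑(α) → 𝓖(α) → 𝓖̄_h(α) commutes. In particular, Γ restricted to 𝓑̄_h(α) is a surjection onto 𝓖̄_h(α). -/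
open Set Filter

/-- The space `𝓑̄_h(α)`: members of `𝓑(α)` which are increasing along diagonals and whose
restriction to the bottom edge grows at least at rate `h`. -/
def MemBbar (h α : ℝ) (ψ : ℝ → ℝ → ℝ) : Prop :=
  MemBLip α ψ ∧
  (∀ u v z, 0 ≤ v → v ≤ u → 0 ≤ z → ψ u v ≤ ψ (u + z) (v + z)) ∧
  (∀ u v, 0 ≤ v → v ≤ u → h * (u - v) ≤ ψ u 0 - ψ v 0)

/-- The space `𝓖`: decreasing nonnegative functions on `[0,1]` vanishing at `1` with
`γ(λθ) ≤ γ(θ) + θγ(λ)`. -/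
def MemG (γ : ℝ → ℝ) : Prop :=
  γ 1 = 0 ∧ (∀ θ, 0 ≤ θ → θ ≤ 1 → 0 ≤ γ θ) ∧
  (∀ a b, 0 ≤ a → a ≤ b → b ≤ 1 → γ b ≤ γ a) ∧
  (∀ l t, 0 ≤ l → l ≤ 1 → 0 ≤ t → t ≤ 1 → γ (l * t) ≤ γ t + t * γ l)

/-- The space `𝓖(α)`: `α`-Lipschitz members of `𝓖`. -/
def MemGLip (α : ℝ) (γ : ℝ → ℝ) : Prop :=
  MemG γ ∧ ∀ a b, 0 ≤ a → a ≤ 1 → 0 ≤ b → b ≤ 1 → |γ a - γ b| ≤ α * |a - b|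

/-- The space `𝓖̄_h(α)`: members of `𝓖(α)` with `γ(0) ≥ h` and `θ ↦ γ(θ)/(1-θ)` increasing. -/
def MemGbar (h α : ℝ) (γ : ℝ → ℝ) : Prop :=
  MemGLip α γ ∧ h ≤ γ 0 ∧
  ∀ a b, 0 ≤ a → a ≤ b → b < 1 → γ a / (1 - a) ≤ γ b / (1 - b)

/-- The normalized limit `Γ(ψ)(θ) = limsup_{u→∞} ψ(u,θu)/u`. -/
noncomputable def Gam (ψ : ℝ → ℝ → ℝ) (θ : ℝ) : ℝ :=
  Filter.limsup (fun u => ψ u (θ * u) / u) Filter.atTop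

/-- The projection `Φ_h(β)(u,v) = max_{0 ≤ z ≤ u}` of `β(u-z,v-z)` for `z ≤ v` and
`h(z-v) + β(u-z,0)` for `v ≤ z ≤ u`. -/
noncomputable def Phi (h : ℝ) (β : ℝ → ℝ → ℝ) (u v : ℝ) : ℝ :=
  sSup ((fun z => if z ≤ v then β (u - z) (v - z) else h * (z - v) + β (u - z) 0) ''
    Set.Icc 0 u)

/-- The projection `Ω_h(γ)(θ) = (1-θ)·max{h, max_{0 ≤ λ ≤ θ} γ(λ)/(1-λ)}`. -/
noncomputable def Om (h : ℝ) (γ : ℝ → ℝ) (θ : ℝ) : ℝ :=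
  (1 - θ) * max h (sSup ((fun l => γ l / (1 - l)) '' Set.Icc 0 θ))

/-- The space `𝓒(α)`: increasing `α`-Lipschitz functions `g : [0,∞) → [0,∞)` with `g(0)=0`. -/
def MemC (α : ℝ) (g : ℝ → ℝ) : Prop :=
  g 0 = 0 ∧ (∀ u, 0 ≤ u → 0 ≤ g u) ∧ (∀ a b, 0 ≤ a → a ≤ b → g a ≤ g b) ∧
  (∀ a b, 0 ≤ a → 0 ≤ b → |g a - g b| ≤ α * |a - b|)

section aux
variable {α h : ℝ} {ψ : ℝ → ℝ → ℝ}

lemma psi_le_lin (hψ : MemBLip α ψ) {u v : ℝ} (hv : 0 ≤ v) (hvu : v ≤ u) :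
    ψ u v ≤ α * (u - v) := by
  have h1 := hψ.2 u v u u hv hvu (hv.trans hvu) le_rfl
  rw [hψ.1.1 u (hv.trans hvu)] at h1
  have h2 := (abs_le.1 h1).2
  have h3 : |u - u| = 0 := by simp
  have h4 : |v - u| = u - v := by rw [abs_of_nonpos (by linarith)]; ring
  rw [h3, h4] at h2; linarith

lemma g_nonneg_ev (hψ : MemBLip α ψ) {l : ℝ} (hl0 : 0 ≤ l) (hl1 : l ≤ 1) :
    ∀ᶠ u in atTop, 0 ≤ ψ u (l * u) / u := by
  filter_upwards [eventually_gt_atTop (0:ℝ)] with u hu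
  have : 0 ≤ ψ u (l * u) := hψ.1.2.1 u (l*u) (by positivity) (by nlinarith)
  positivity

lemma g_le_ev (hψ : MemBLip α ψ) {l : ℝ} (hl0 : 0 ≤ l) (hl1 : l ≤ 1) :
    ∀ᶠ u in atTop, ψ u (l * u) / u ≤ α * (1 - l) := by
  filter_upwards [eventually_gt_atTop (0:ℝ)] with u hu
  have h1 : ψ u (l*u) ≤ α * (u - l*u) := psi_le_lin hψ (by positivity) (by nlinarith)
  rw [div_le_iff₀ hu]; nlinarith

lemma g_bdd (hψ : MemBLip α ψ) {l : ℝ} (hl0 : 0 ≤ l) (hl1 : l ≤ 1) :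
    IsBoundedUnder (· ≤ ·) atTop (fun u => ψ u (l * u) / u) :=
  isBoundedUnder_of_eventually_le (g_le_ev hψ hl0 hl1)

lemma g_cobdd (hψ : MemBLip α ψ) {l : ℝ} (hl0 : 0 ≤ l) (hl1 : l ≤ 1) :
    IsCoboundedUnder (· ≤ ·) atTop (fun u => ψ u (l * u) / u) :=
  isCoboundedUnder_le_of_eventually_le atTop (g_nonneg_ev hψ hl0 hl1)

lemma gam_nonneg (hψ : MemBLip α ψ) {l : ℝ} (hl0 : 0 ≤ l) (hl1 : l ≤ 1) :
    0 ≤ Gam ψ l :=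
  le_limsup_of_frequently_le ((g_nonneg_ev hψ hl0 hl1).frequently) (g_bdd hψ hl0 hl1)

lemma gam_le (hψ : MemBLip α ψ) {l : ℝ} (hl0 : 0 ≤ l) (hl1 : l ≤ 1) :
    Gam ψ l ≤ α * (1 - l) :=
  limsup_le_of_le (g_cobdd hψ hl0 hl1) (g_le_ev hψ hl0 hl1)

lemma gam_lip_one (hψ : MemBLip α ψ) {a b : ℝ} (ha0 : 0 ≤ a) (ha1 : a ≤ 1)
    (hb0 : 0 ≤ b) (hb1 : b ≤ 1) :
    Gam ψ a ≤ Gam ψ b + α * |a - b| := by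
  have hev : ∀ᶠ u in atTop, ψ u (a*u)/u ≤ ψ u (b*u)/u + α * |a-b| := by
    filter_upwards [eventually_gt_atTop (0:ℝ)] with u hu
    have h1 := hψ.2 u (a*u) u (b*u) (by positivity) (by nlinarith) (by positivity) (by nlinarith)
    have h2 := (abs_le.1 h1).2
    have h3 : |u - u| = 0 := by simp
    have h4 : |a*u - b*u| = |a-b| * u := by rw [← sub_mul, abs_mul, abs_of_pos hu]
    rw [h3, h4, zero_add] at h2
    rw [div_add' _ _ _ (ne_of_gt hu), div_le_div_iff₀ hu hu]
    nlinarith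
  have hbd2 : IsBoundedUnder (· ≤ ·) atTop (fun u => ψ u (b*u)/u + α*|a-b|) :=
    isBoundedUnder_of_eventually_le (a := α*(1-b) + α*|a-b|)
      ((g_le_ev hψ hb0 hb1).mono (fun u hu => by linarith))
  calc Gam ψ a ≤ limsup (fun u => ψ u (b*u)/u + α*|a-b|) atTop :=
        limsup_le_limsup hev (g_cobdd hψ ha0 ha1) hbd2
  _ = Gam ψ b + α*|a-b| := limsup_add_const atTop _ _ (g_bdd hψ hb0 hb1) (g_cobdd hψ hb0 hb1)


lemma uniform_up (hψ : MemBLip α ψ) (hα : 0 ≤ α) {ε : ℝ} (hε : 0 < ε) :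
    ∃ W : ℝ, 1 ≤ W ∧ ∀ w, W ≤ w → ∀ l, 0 ≤ l → l ≤ 1 →
      ψ w (l * w) ≤ (Gam ψ l + ε) * w := by
  obtain ⟨n, hn⟩ := exists_nat_gt (4 * α / ε)
  set N : ℕ := n + 1 with hN
  have hNpos : (0:ℝ) < N := by positivity
  have hN4 : 4 * α / ε < (N:ℝ) := by
    refine hn.trans_le ?_
    exact_mod_cast Nat.le_succ n
  have hαN : α / N < ε / 4 := by
    rw [div_lt_div_iff₀ hNpos (by norm_num)]
    rw [div_lt_iff₀ hε] at hN4
    nlinarith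
  have key : ∀ᶠ w in atTop, (∀ i ∈ Finset.range (N+1),
      ψ w (((i:ℝ)/N) * w) / w < Gam ψ ((i:ℝ)/N) + ε/2) ∧ 1 ≤ w := by
    refine (((Finset.range (N+1)).eventually_all.2 ?_).and (eventually_ge_atTop 1))
    intro i hi
    have hi0 : (0:ℝ) ≤ (i:ℝ)/N := by positivity
    have hi1 : (i:ℝ)/N ≤ 1 := by
      rw [div_le_one hNpos]
      exact_mod_cast Nat.lt_succ_iff.1 (Finset.mem_range.1 hi)
    exact eventually_lt_of_limsup_lt (by simpa [Gam] using lt_add_of_pos_right (Gam ψ ((i:ℝ)/N)) (by linarith : (0:ℝ) < ε/2))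
      (g_bdd hψ hi0 hi1)
  rw [eventually_atTop] at key
  obtain ⟨W0, hW0⟩ := key
  refine ⟨max W0 1, le_max_right _ _, fun w hw l hl0 hl1 => ?_⟩
  obtain ⟨hgrid, hw1⟩ := hW0 w (le_trans (le_max_left _ _) hw)
  have hwpos : (0:ℝ) < w := lt_of_lt_of_le one_pos hw1
  set i : ℕ := ⌊l * N⌋₊ with hidef
  set q : ℝ := (i:ℝ)/N with hq
  have hiN : i ∈ Finset.range (N+1) := by
    rw [Finset.mem_range, Nat.lt_succ_iff]
    have : l * N ≤ N := by nlinarith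
    calc i = ⌊l * N⌋₊ := rfl
    _ ≤ ⌊(N:ℝ)⌋₊ := Nat.floor_le_floor this
    _ = N := Nat.floor_natCast N
  have hql : q ≤ l := by
    rw [hq, div_le_iff₀ hNpos]
    exact Nat.floor_le (by positivity)
  have hlq : l - q < 1/N := by
    have h := Nat.lt_floor_add_one (l * N)
    rw [← hidef] at h
    have h2 : l < ((i:ℝ)+1)/N := by rw [lt_div_iff₀ hNpos]; linarith
    have h3 : ((i:ℝ)+1)/N - (i:ℝ)/N = 1/N := by ring
    rw [hq]; linarith
  have hq0 : 0 ≤ q := by positivity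
  have hq1 : q ≤ 1 := hql.trans hl1
  -- Lipschitz step
  have hlip := hψ.2 w (l*w) w (q*w) (by positivity) (by nlinarith) (by positivity) (by nlinarith)
  have h4 : |l*w - q*w| = (l-q) * w := by
    rw [← sub_mul, abs_mul, abs_of_pos hwpos, abs_of_nonneg (by linarith)]
  have hlip2 : ψ w (l*w) ≤ ψ w (q*w) + α * ((l-q)*w) := by
    have := (abs_le.1 hlip).2
    rw [show |w - w| = 0 by simp, h4, zero_add] at this
    linarith
  have hmid : ψ w (q*w) < (Gam ψ q + ε/2) * w := by
    have := hgrid i hiN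
    rw [div_lt_iff₀ hwpos] at this
    exact this
  have hml : α * (l - q) ≤ ε / 4 := by
    have h5 : α * (l-q) ≤ α * (1/N) := mul_le_mul_of_nonneg_left (by linarith) hα
    have h6 : α * (1/N) = α / N := by ring
    linarith
  have hgl : Gam ψ q ≤ Gam ψ l + ε/4 := by
    have hg := gam_lip_one hψ hq0 hq1 hl0 hl1
    have habs : |q - l| = l - q := by rw [abs_of_nonpos (by linarith)]; ring
    rw [habs] at hg
    linarith
  have hstep : α * ((l-q)*w) ≤ (ε/4) * w := by
    rw [← mul_assoc]
    exact mul_le_mul_of_nonneg_right hml hwpos.le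
  have hglw := mul_le_mul_of_nonneg_right hgl hwpos.le
  nlinarith [hmid, hlip2, hstep, hglw]


lemma phi_mem_bound (hψ : MemBLip α ψ) (hh : 0 ≤ h) (hα : 0 ≤ α) {u v : ℝ}
    (hv : 0 ≤ v) (hvu : v ≤ u) :
    ∀ x ∈ ((fun z => if z ≤ v then ψ (u - z) (v - z) else h * (z - v) + ψ (u - z) 0) '' Icc 0 u),
      x ≤ (h + α) * u := by
  rintro x ⟨z, ⟨hz0, hzu⟩, rfl⟩
  by_cases hzv : z ≤ v
  · simp only [if_pos hzv]
    have := psi_le_lin hψ (u := u - z) (v := v - z) (sub_nonneg.2 hzv) (by linarith)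
    nlinarith
  · simp only [if_neg hzv]
    push_neg at hzv
    have h1 := psi_le_lin hψ le_rfl (by linarith : (0:ℝ) ≤ u - z)
    nlinarith

lemma phi_bddAbove (hψ : MemBLip α ψ) (hh : 0 ≤ h) (hα : 0 ≤ α) {u v : ℝ}
    (hv : 0 ≤ v) (hvu : v ≤ u) :
    BddAbove ((fun z => if z ≤ v then ψ (u - z) (v - z) else h * (z - v) + ψ (u - z) 0) '' Icc 0 u) :=
  ⟨(h + α) * u, fun x hx => phi_mem_bound hψ hh hα hv hvu x hx⟩

lemma le_phi (hψ : MemBLip α ψ) (hh : 0 ≤ h) (hα : 0 ≤ α) {u v z : ℝ}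
    (hv : 0 ≤ v) (hvu : v ≤ u) (hz0 : 0 ≤ z) (hzu : z ≤ u) :
    (if z ≤ v then ψ (u - z) (v - z) else h * (z - v) + ψ (u - z) 0) ≤ Phi h ψ u v :=
  le_csSup (phi_bddAbove hψ hh hα hv hvu) (mem_image_of_mem _ ⟨hz0, hzu⟩)

lemma phi_ge_h (hψ : MemBLip α ψ) (hh : 0 ≤ h) (hα : 0 ≤ α) {u θ : ℝ}
    (hθ0 : 0 ≤ θ) (hθ1 : θ < 1) (hu : 0 < u) :
    h * (1 - θ) * u ≤ Phi h ψ u (θ * u) := by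
  have hle := le_phi hψ hh hα (v := θ*u) (z := u) (by positivity) (by nlinarith) hu.le le_rfl
  rw [if_neg (by nlinarith), sub_self] at hle
  have h0 : ψ 0 0 = 0 := hψ.1.1 0 le_rfl
  rw [h0] at hle
  calc h * (1-θ)*u = h * (u - θ*u) + 0 := by ring
  _ ≤ Phi h ψ u (θ*u) := hle

lemma phi_le_of (hψ : MemBLip α ψ) (hh : 0 ≤ h) (hα : 0 ≤ α) {u v B : ℝ} (hB : 0 ≤ B)
    (hall : ∀ z, 0 ≤ z → z ≤ u →
      (if z ≤ v then ψ (u - z) (v - z) else h * (z - v) + ψ (u - z) 0) ≤ B) :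
    Phi h ψ u v ≤ B := by
  apply Real.sSup_le _ hB
  rintro x ⟨z, ⟨hz0, hzu⟩, rfl⟩
  exact hall z hz0 hzu

lemma phi_diag (hψ : MemBLip α ψ) (hh : 0 ≤ h) (hα : 0 ≤ α) {u : ℝ} (hu : 0 ≤ u) :
    Phi h ψ u u = 0 := by
  apply le_antisymm
  · apply phi_le_of hψ hh hα le_rfl
    intro z hz0 hzu
    rw [if_pos hzu, hψ.1.1 (u - z) (by linarith)]
  · have := le_phi hψ hh hα (v := u) (z := 0) hu le_rfl le_rfl hu
    rw [if_pos hu, sub_zero, hψ.1.1 u hu] at this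
    exact this

lemma gam_phi_one (hψ : MemBLip α ψ) (hh : 0 ≤ h) (hα : 0 ≤ α) :
    Gam (Phi h ψ) 1 = 0 := by
  have hev : ∀ᶠ u in atTop, Phi h ψ u (1 * u) / u = (fun _ => (0:ℝ)) u := by
    filter_upwards [eventually_ge_atTop (0:ℝ)] with u hu
    rw [one_mul, phi_diag hψ hh hα hu, zero_div]
  rw [Gam, limsup_congr hev, limsup_const]


lemma phi_div_nonneg_ev (hψ : MemBLip α ψ) (hh : 0 ≤ h) (hα : 0 ≤ α) {θ : ℝ}
    (hθ0 : 0 ≤ θ) (hθ1 : θ < 1) :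
    ∀ᶠ u in atTop, 0 ≤ Phi h ψ u (θ * u) / u := by
  filter_upwards [eventually_gt_atTop (0:ℝ)] with u hu
  have := phi_ge_h hψ hh hα hθ0 hθ1 hu
  have h2 : (0:ℝ) ≤ h * (1-θ) * u := mul_nonneg (mul_nonneg hh (by linarith)) hu.le
  exact div_nonneg (h2.trans this) hu.le

lemma phi_div_le_ev (hψ : MemBLip α ψ) (hh : 0 ≤ h) (hα : 0 ≤ α) {θ : ℝ}
    (hθ0 : 0 ≤ θ) (hθ1 : θ ≤ 1) :
    ∀ᶠ u in atTop, Phi h ψ u (θ * u) / u ≤ h + α := by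
  filter_upwards [eventually_gt_atTop (0:ℝ)] with u hu
  rw [div_le_iff₀ hu]
  apply phi_le_of hψ hh hα (mul_nonneg (by linarith) hu.le)
  intro z hz0 hzu
  have := phi_mem_bound hψ hh hα (v := θ*u) (by positivity) (by nlinarith) _
    (mem_image_of_mem _ (⟨hz0, hzu⟩ : z ∈ Icc 0 u))
  exact this

set_option maxHeartbeats 1000000 in
lemma phiGam_le (hψ : MemBLip α ψ) (hh : 0 ≤ h) (hhα : h ≤ α) {θ : ℝ}
    (hθ0 : 0 ≤ θ) (hθ1 : θ < 1) : Gam (Phi h ψ) θ ≤ Om h (Gam ψ) θ := by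
  have hα : 0 ≤ α := hh.trans hhα
  set S := (fun l => Gam ψ l / (1 - l)) '' Icc 0 θ with hS
  have hSub : ∀ x ∈ S, x ≤ α := by
    rintro x ⟨l, ⟨hl0, hlθ⟩, rfl⟩
    have hl1 : (0:ℝ) < 1 - l := by linarith
    rw [div_le_iff₀ hl1]
    have := gam_le hψ hl0 (by linarith)
    nlinarith
  have hSbdd : BddAbove S := ⟨α, hSub⟩
  obtain ⟨K, hK⟩ : ∃ K : ℝ, K = max h (sSup S) := ⟨_, rfl⟩
  have hhK : h ≤ K := hK ▸ le_max_left _ _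
  have hK0 : 0 ≤ K := le_trans hh hhK
  have hlK : ∀ l, 0 ≤ l → l ≤ θ → Gam ψ l ≤ (1 - l) * K := by
    intro l hl0 hlθ
    have hl1 : (0:ℝ) < 1 - l := by linarith
    have h1 : Gam ψ l / (1-l) ≤ sSup S := le_csSup hSbdd (mem_image_of_mem _ ⟨hl0, hlθ⟩)
    have h2 : Gam ψ l / (1-l) ≤ K := h1.trans (hK ▸ le_max_right h (sSup S))
    rw [div_le_iff₀ hl1] at h2; linarith
  have hOm : Om h (Gam ψ) θ = (1-θ)*K := by
    simp only [Om]; rw [← hS, ← hK]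
  rw [hOm]
  refine le_of_forall_pos_le_add ?_
  intro ε hε
  obtain ⟨W, hW1, hWp⟩ := uniform_up hψ hα hε
  have hWpos : (0:ℝ) < W := lt_of_lt_of_le one_pos hW1
  set U := max (max (W/(1-θ)) (α*W/ε + 1)) 1 with hU
  have hev : ∀ᶠ u in atTop, Phi h ψ u (θ*u)/u ≤ (1-θ)*K + ε := by
    filter_upwards [eventually_ge_atTop U] with u hu
    have hu1 : (1:ℝ) ≤ u := le_trans (le_max_right _ _) hu
    have hupos : (0:ℝ) < u := lt_of_lt_of_le one_pos hu1
    have huW : W/(1-θ) ≤ u := le_trans (le_trans (le_max_left _ _) (le_max_left _ _)) hu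
    have huε : α*W/ε + 1 ≤ u := le_trans (le_trans (le_max_right _ _) (le_max_left _ _)) hu
    rw [div_le_iff₀ hupos]
    apply phi_le_of hψ hh hα
      (mul_nonneg (by nlinarith [mul_nonneg (by linarith : (0:ℝ) ≤ 1-θ) hK0]) hupos.le)
    intro z hz0 hzu
    by_cases hzv : z ≤ θ*u
    · rw [if_pos hzv]
      set w := u - z with hw
      have hwW : W ≤ w := by
        rw [div_le_iff₀ (by linarith : (0:ℝ) < 1-θ)] at huW
        nlinarith
      have hwpos : (0:ℝ) < w := lt_of_lt_of_le hWpos hwW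
      set l := (θ*u - z)/w with hl
      have hl0 : 0 ≤ l := div_nonneg (by linarith) hwpos.le
      have hlθ : l ≤ θ := by
        rw [div_le_iff₀ hwpos, hw]
        nlinarith
      have hlw : l * w = θ*u - z := div_mul_cancel₀ _ (ne_of_gt hwpos)
      have hmain := hWp w hwW l hl0 (hlθ.trans hθ1.le)
      rw [hlw] at hmain
      have hK' : Gam ψ l ≤ (1-l)*K := hlK l hl0 hlθ
      have hwm : (1-l)*w = (1-θ)*u := by
        rw [sub_mul, one_mul, hlw, hw]; ring
      have h6 : Gam ψ l * w ≤ ((1-l)*K)*w := mul_le_mul_of_nonneg_right hK' hwpos.le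
      have h7 : ((1-l)*K)*w = (1-θ)*K*u := by
        calc ((1-l)*K)*w = K*((1-l)*w) := by ring
        _ = K*((1-θ)*u) := by rw [hwm]
        _ = (1-θ)*K*u := by ring
      have h8 : ε*w ≤ ε*u := by nlinarith
      nlinarith [hmain, h6, h7, h8]
    · rw [if_neg hzv]
      push_neg at hzv
      by_cases hwc : W ≤ u - z
      · have hmain := hWp (u-z) hwc 0 le_rfl (by norm_num)
        rw [zero_mul] at hmain
        have hg0 : Gam ψ 0 ≤ K := by
          have := hlK 0 le_rfl hθ0; linarith
        have huz : (0:ℝ) < u - z := lt_of_lt_of_le hWpos hwc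
        have h6 : Gam ψ 0 * (u-z) ≤ K * (u-z) := mul_le_mul_of_nonneg_right hg0 huz.le
        have h7 : h * (z - θ*u) ≤ K * (z - θ*u) := mul_le_mul_of_nonneg_right hhK (by linarith)
        nlinarith [hmain, h6, h7, mul_nonneg hε.le hz0]
      · push_neg at hwc
        have hψb := psi_le_lin hψ (u := u - z) (v := 0) le_rfl (by linarith)
        have hαW : α*(u-z) ≤ α*W := mul_le_mul_of_nonneg_left hwc.le hα
        have hεu : α*W ≤ ε*u := by
          rw [div_add' _ _ _ (ne_of_gt hε), div_le_iff₀ hε] at huε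
          nlinarith
        have h7 : h * (z - θ*u) ≤ h * (u - θ*u) := mul_le_mul_of_nonneg_left (by linarith) hh
        nlinarith [hψb, hαW, hεu, h7, mul_le_mul_of_nonneg_right hhK (by linarith : (0:ℝ) ≤ u - θ*u)]
  exact limsup_le_of_le
    (isCoboundedUnder_le_of_eventually_le atTop (phi_div_nonneg_ev hψ hh hα hθ0 hθ1)) hev


set_option maxHeartbeats 1000000 in
lemma om_le_phiGam (hψ : MemBLip α ψ) (hh : 0 ≤ h) (hhα : h ≤ α) {θ : ℝ}
    (hθ0 : 0 ≤ θ) (hθ1 : θ < 1) : Om h (Gam ψ) θ ≤ Gam (Phi h ψ) θ := by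
  have hα : 0 ≤ α := hh.trans hhα
  have hbdd : IsBoundedUnder (· ≤ ·) atTop (fun u => Phi h ψ u (θ*u)/u) :=
    isBoundedUnder_of_eventually_le (phi_div_le_ev hψ hh hα hθ0 hθ1.le)
  obtain ⟨G, hG⟩ : ∃ G : ℝ, G = Gam (Phi h ψ) θ := ⟨_, rfl⟩
  have hstep1 : h * (1-θ) ≤ G := by
    rw [hG]
    apply le_limsup_of_frequently_le _ hbdd
    apply Eventually.frequently
    filter_upwards [eventually_gt_atTop (0:ℝ)] with u hu
    rw [le_div_iff₀ hu]
    calc h*(1-θ)*u = h*(1-θ)*u := rfl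
    _ ≤ Phi h ψ u (θ*u) := phi_ge_h hψ hh hα hθ0 hθ1 hu
  have hstep2 : ∀ l, 0 ≤ l → l ≤ θ → (1-θ)/(1-l) * Gam ψ l ≤ G := by
    intro l hl0 hlθ
    have hl1 : (0:ℝ) < 1 - l := by linarith
    obtain ⟨c, hc⟩ : ∃ c : ℝ, c = (1-θ)/(1-l) := ⟨_, rfl⟩
    have hcpos : 0 < c := hc ▸ div_pos (by linarith) hl1
    have hc1 : c ≤ 1 := by rw [hc, div_le_one hl1]; linarith
    obtain ⟨s, hs⟩ : ∃ s : ℝ, s = (θ-l)/(1-l) := ⟨_, rfl⟩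
    have hs0 : 0 ≤ s := hs ▸ div_nonneg (by linarith) hl1.le
    have hcs : c = 1 - s := by rw [hs, hc]; field_simp; ring
    have hsθ : s ≤ θ := by rw [hs, div_le_iff₀ hl1]; nlinarith
    rw [← hc]
    refine le_of_forall_pos_le_add ?_
    intro ε hε
    have hfreq : ∃ᶠ w in atTop, Gam ψ l - ε < ψ w (l*w)/w :=
      frequently_lt_of_lt_limsup (g_cobdd hψ hl0 (by linarith))
        (by change Gam ψ l - ε < Gam ψ l; linarith)
    have hfreq2 : ∃ᶠ u in atTop, c * Gam ψ l - ε ≤ Phi h ψ u (θ*u)/u := by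
      rw [frequently_atTop] at hfreq ⊢
      intro a
      obtain ⟨w, hwge, hwlt⟩ := hfreq (max (c * max a 1) 1)
      have hw1 : (1:ℝ) ≤ w := le_trans (le_max_right _ _) hwge
      have hwpos : (0:ℝ) < w := lt_of_lt_of_le one_pos hw1
      refine ⟨w/c, ?_, ?_⟩
      · rw [le_div_iff₀ hcpos]
        have hcm : c * max a 1 ≤ w := le_trans (le_max_left _ _) hwge
        calc a * c ≤ max a 1 * c := mul_le_mul_of_nonneg_right (le_max_left a 1) hcpos.le
        _ = c * max a 1 := by ring
        _ ≤ w := hcm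
      · obtain ⟨u, hu⟩ : ∃ u : ℝ, u = w / c := ⟨_, rfl⟩
        rw [← hu]
        have hupos : 0 < u := hu ▸ div_pos hwpos hcpos
        have hcu : c * u = w := by rw [hu]; field_simp
        have hz0 : 0 ≤ s*u := mul_nonneg hs0 hupos.le
        have hzθ : s*u ≤ θ*u := mul_le_mul_of_nonneg_right hsθ hupos.le
        have hle := le_phi hψ hh hα (u := u) (v := θ*u) (z := s*u) (by positivity)
          (by nlinarith) hz0 (by nlinarith)
        rw [if_pos hzθ] at hle
        have he1 : u - s*u = c*u := by rw [hcs]; ring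
        have he2 : θ*u - s*u = l*(c*u) := by
          have hθs : θ - s = l*c := by
            rw [hs, hc]; field_simp; ring
          calc θ*u - s*u = (θ-s)*u := by ring
          _ = l*c*u := by rw [hθs]
          _ = l*(c*u) := by ring
        rw [he1, he2, hcu] at hle
        rw [lt_div_iff₀ hwpos] at hwlt
        rw [le_div_iff₀ hupos]
        have hcomp : (c * Gam ψ l - ε)*u ≤ (Gam ψ l - ε)*w := by
          rw [← hcu]; nlinarith
        linarith [hle, hwlt, hcomp]
    have hfin : c * Gam ψ l - ε ≤ Gam (Phi h ψ) θ := le_limsup_of_frequently_le hfreq2 hbdd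
    rw [← hG] at hfin; linarith
  set S := (fun l => Gam ψ l / (1 - l)) '' Icc 0 θ with hS
  have hSne : S.Nonempty := ⟨_, mem_image_of_mem _ (⟨le_rfl, hθ0⟩ : (0:ℝ) ∈ Icc 0 θ)⟩
  have hstep3 : sSup S ≤ G/(1-θ) := by
    apply csSup_le hSne
    rintro x ⟨l, ⟨hl0, hlθ⟩, rfl⟩
    rw [le_div_iff₀ (by linarith : (0:ℝ) < 1-θ)]
    have h1 := hstep2 l hl0 hlθ
    have heq : Gam ψ l/(1-l) * (1-θ) = (1-θ)/(1-l) * Gam ψ l := by ring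
    rw [heq]; exact h1
  have hhG : h ≤ G/(1-θ) := by
    rw [le_div_iff₀ (by linarith : (0:ℝ) < 1-θ)]; linarith
  have hOm : Om h (Gam ψ) θ = (1-θ) * max h (sSup S) := by
    simp only [Om, ← hS]
  rw [hOm, ← hG]
  calc (1-θ) * max h (sSup S) ≤ (1-θ)*(G/(1-θ)) :=
        mul_le_mul_of_nonneg_left (max_le hhG hstep3) (by linarith)
  _ = G := by rw [mul_comm]; exact div_mul_cancel₀ G (by linarith)

end aux

section part2
variable {α h : ℝ} {γ : ℝ → ℝ}

lemma gb_one (hγ : MemGbar h α γ) : γ 1 = 0 := hγ.1.1.1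
lemma gb_nonneg (hγ : MemGbar h α γ) : ∀ t, 0 ≤ t → t ≤ 1 → 0 ≤ γ t := hγ.1.1.2.1
lemma gb_anti (hγ : MemGbar h α γ) : ∀ a b, 0 ≤ a → a ≤ b → b ≤ 1 → γ b ≤ γ a := hγ.1.1.2.2.1
lemma gb_sub (hγ : MemGbar h α γ) :
    ∀ l t, 0 ≤ l → l ≤ 1 → 0 ≤ t → t ≤ 1 → γ (l * t) ≤ γ t + t * γ l := hγ.1.1.2.2.2
lemma gb_lip (hγ : MemGbar h α γ) :
    ∀ a b, 0 ≤ a → a ≤ 1 → 0 ≤ b → b ≤ 1 → |γ a - γ b| ≤ α * |a - b| := hγ.1.2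

lemma gb_le (hγ : MemGbar h α γ) {t : ℝ} (ht0 : 0 ≤ t) (ht1 : t ≤ 1) :
    γ t ≤ α * (1 - t) := by
  have hl := gb_lip hγ t 1 ht0 ht1 zero_le_one le_rfl
  rw [gb_one hγ, sub_zero] at hl
  have h1 : |t - 1| = 1 - t := by rw [abs_of_nonpos (by linarith)]; ring
  rw [h1] at hl
  calc γ t ≤ |γ t| := le_abs_self _
  _ ≤ α * (1-t) := hl

lemma F_nonneg (hγ : MemGbar h α γ) {u v : ℝ} (hv : 0 ≤ v) (hvu : v ≤ u) :
    0 ≤ u * γ (v/u) := by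
  rcases eq_or_lt_of_le (hv.trans hvu) with hu | hu
  · rw [← hu]; simp
  · exact mul_nonneg hu.le (gb_nonneg hγ _ (div_nonneg hv hu.le) ((div_le_one hu).2 hvu))

lemma F_diag_zero (hγ : MemGbar h α γ) {u : ℝ} (hu : 0 ≤ u) : u * γ (u/u) = 0 := by
  rcases eq_or_lt_of_le hu with hu' | hu'
  · rw [← hu']; simp
  · rw [div_self (ne_of_gt hu'), gb_one hγ, mul_zero]

lemma F_lipA (hγ : MemGbar h α γ) (hα : 0 ≤ α) {u v v' : ℝ} (hv : 0 ≤ v) (hvu : v ≤ u)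
    (hv' : 0 ≤ v') (hv'u : v' ≤ u) : |u * γ (v/u) - u * γ (v'/u)| ≤ α * |v - v'| := by
  rcases eq_or_lt_of_le (hv.trans hvu) with hu | hu
  · have hv0 : v = 0 := le_antisymm (by linarith) hv
    have hv'0 : v' = 0 := le_antisymm (by linarith) hv'
    rw [← hu, hv0, hv'0]; simp
  · have hl := gb_lip hγ (v/u) (v'/u) (div_nonneg hv hu.le) ((div_le_one hu).2 hvu)
      (div_nonneg hv' hu.le) ((div_le_one hu).2 hv'u)
    have habs : |v/u - v'/u| = |v - v'|/u := by
      rw [div_sub_div_same, abs_div, abs_of_pos hu]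
    rw [habs] at hl
    rw [← mul_sub, abs_mul, abs_of_pos hu]
    calc u * |γ (v/u) - γ (v'/u)| ≤ u * (α * (|v-v'|/u)) :=
          mul_le_mul_of_nonneg_left hl hu.le
    _ = α * |v-v'| := by field_simp
 
lemma F_lipB (hγ : MemGbar h α γ) (hα : 0 ≤ α) {u u' v : ℝ} (hv : 0 ≤ v) (hvu' : v ≤ u')
    (hu'u : u' ≤ u) : |u * γ (v/u) - u' * γ (v/u')| ≤ α * (u - u') := by
  rcases eq_or_lt_of_le (hv.trans hvu') with hu' | hu'
  · have hv0 : v = 0 := le_antisymm (by linarith) hv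
    rw [← hu', hv0]
    simp only [zero_mul, mul_zero, sub_zero, zero_div]
    have hu0 : 0 ≤ u := by linarith
    rcases eq_or_lt_of_le hu0 with hu | hu
    · rw [← hu]; simp
    · rw [abs_of_nonneg (mul_nonneg hu0 (gb_nonneg hγ 0 le_rfl zero_le_one))]
      have := gb_le hγ (t := 0) le_rfl zero_le_one
      nlinarith
  · have hu : (0:ℝ) < u := lt_of_lt_of_le hu' hu'u
    have ht0 : 0 ≤ v/u := div_nonneg hv hu.le
    have ht1 : v/u ≤ 1 := (div_le_one hu).2 (hvu'.trans hu'u)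
    have ht'0 : 0 ≤ v/u' := div_nonneg hv hu'.le
    have ht'1 : v/u' ≤ 1 := (div_le_one hu').2 hvu'
    have htt' : v/u ≤ v/u' := div_le_div_of_nonneg_left hv hu' hu'u
    have hmono : γ (v/u') ≤ γ (v/u) := gb_anti hγ _ _ ht0 htt' ht'1
    have hlip : γ (v/u) - γ (v/u') ≤ α * (v/u' - v/u) := by
      have := gb_lip hγ (v/u) (v/u') ht0 ht1 ht'0 ht'1
      have habs : |v/u - v/u'| = v/u' - v/u := by rw [abs_of_nonpos (by linarith)]; ring
      rw [habs] at this
      linarith [(abs_le.1 this).2]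
    have hid : u' * (v/u' - v/u) = (v/u) * (u - u') := by
      field_simp
    have hγt : γ (v/u) ≤ α * (1 - v/u) := gb_le hγ ht0 ht1
    rw [abs_le]
    constructor
    · -- lower: A ≥ 0
      have h1 : u' * γ (v/u') ≤ u' * γ (v/u) := mul_le_mul_of_nonneg_left hmono hu'.le
      have h2 : u' * γ (v/u) ≤ u * γ (v/u) :=
        mul_le_mul_of_nonneg_right hu'u (gb_nonneg hγ _ ht0 ht1)
      nlinarith
    · -- upper
      have p1 : u' * (γ (v/u) - γ (v/u')) ≤ u' * (α * (v/u' - v/u)) :=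
        mul_le_mul_of_nonneg_left hlip hu'.le
      have p2 : (u - u') * γ (v/u) ≤ (u - u') * (α * (1 - v/u)) :=
        mul_le_mul_of_nonneg_left hγt (by linarith)
      have p3 : u' * (α * (v/u' - v/u)) = α * ((v/u) * (u - u')) := by
        calc u' * (α * (v/u' - v/u)) = α * (u' * (v/u' - v/u)) := by ring
        _ = α * ((v/u) * (u - u')) := by rw [hid]
      nlinarith [p1, p2, p3]

lemma F_lip_one_sided (hγ : MemGbar h α γ) (hα : 0 ≤ α) {u v u' v' : ℝ} (hv : 0 ≤ v)
    (hvu : v ≤ u) (hv' : 0 ≤ v') (hv'u : v' ≤ u') (hu'u : u' ≤ u) :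
    |u * γ (v/u) - u' * γ (v'/u')| ≤ α * (|u - u'| + |v - v'|) := by
  set m := min v u' with hm
  have hm0 : 0 ≤ m := le_min hv (hv'.trans hv'u)
  have hmu : m ≤ u := le_trans (min_le_left _ _) hvu
  have hmu' : m ≤ u' := min_le_right _ _
  have t1 : |u * γ (v/u) - u * γ (m/u)| ≤ α * |v - m| := F_lipA hγ hα hv hvu hm0 hmu
  have t2 : |u * γ (m/u) - u' * γ (m/u')| ≤ α * (u - u') := F_lipB hγ hα hm0 hmu' hu'u
  have t3 : |u' * γ (m/u') - u' * γ (v'/u')| ≤ α * |m - v'| := F_lipA hγ hα hm0 hmu' hv' hv'u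
  have habs : |v - m| + |m - v'| = |v - v'| := by
    rcases le_total v u' with hc | hc
    · have : m = v := min_eq_left hc
      rw [this]; simp
    · have hmeq : m = u' := min_eq_right hc
      rw [hmeq, abs_of_nonneg (by linarith), abs_of_nonneg (by linarith),
        abs_of_nonneg (by linarith)]
      ring
  have habs2 : |u - u'| = u - u' := abs_of_nonneg (by linarith)
  calc |u * γ (v/u) - u' * γ (v'/u')|
      ≤ |u * γ (v/u) - u * γ (m/u)| + |u * γ (m/u) - u' * γ (m/u')|
        + |u' * γ (m/u') - u' * γ (v'/u')| := by
        have := abs_sub_le (u * γ (v/u)) (u * γ (m/u)) (u' * γ (v'/u'))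
        have := abs_sub_le (u * γ (m/u)) (u' * γ (m/u')) (u' * γ (v'/u'))
        calc |u * γ (v/u) - u' * γ (v'/u')|
            ≤ |u * γ (v/u) - u * γ (m/u)| + |u * γ (m/u) - u' * γ (v'/u')| :=
              abs_sub_le _ _ _
        _ ≤ |u * γ (v/u) - u * γ (m/u)| + (|u * γ (m/u) - u' * γ (m/u')|
            + |u' * γ (m/u') - u' * γ (v'/u')|) := by
              linarith [abs_sub_le (u * γ (m/u)) (u' * γ (m/u')) (u' * γ (v'/u'))]
        _ = _ := by ring
  _ ≤ α * |v - m| + α * (u - u') + α * |m - v'| := by linarith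
  _ = α * (|u - u'| + |v - v'|) := by rw [habs2, ← habs]; ring


lemma F_subadd (hγ : MemGbar h α γ) {u w v : ℝ} (hv : 0 ≤ v) (hvw : v ≤ w) (hwu : w ≤ u) :
    u * γ (v/u) ≤ u * γ (w/u) + w * γ (v/w) := by
  rcases eq_or_lt_of_le ((hv.trans hvw).trans hwu) with hu | hu
  · have hw0 : w = 0 := le_antisymm (by linarith) (hv.trans hvw)
    have hv0 : v = 0 := le_antisymm (by linarith [hvw, hw0]) hv
    rw [← hu, hv0, hw0]; simp
  · rcases eq_or_lt_of_le (hv.trans hvw) with hw | hw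
    · have hv0 : v = 0 := le_antisymm (by linarith) hv
      rw [← hw, hv0]; simp
    · have hsub := gb_sub hγ (v/w) (w/u) (div_nonneg hv hw.le) ((div_le_one hw).2 hvw)
        (div_nonneg (hv.trans hvw) hu.le) ((div_le_one hu).2 hwu)
      have harg : (v/w) * (w/u) = v/u := by
        field_simp
      rw [harg] at hsub
      have hmul := mul_le_mul_of_nonneg_left hsub hu.le
      have hwu' : u * (w/u * γ (v/w)) = w * γ (v/w) := by
        field_simp
      calc u * γ (v/u) ≤ u * (γ (w/u) + w/u * γ (v/w)) := hmul
      _ = u * γ (w/u) + u * (w/u * γ (v/w)) := by ring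
      _ = u * γ (w/u) + w * γ (v/w) := by rw [hwu']

lemma F_mono (hγ : MemGbar h α γ) {u w v : ℝ} (hv : 0 ≤ v) (hvw : v ≤ w) (hwu : w ≤ u) :
    w * γ (v/w) ≤ u * γ (v/u) := by
  rcases eq_or_lt_of_le (hv.trans hvw) with hw | hw
  · have hv0 : v = 0 := le_antisymm (by linarith) hv
    rw [← hw, hv0]
    simp only [zero_mul, zero_div]
    exact mul_nonneg (by linarith) (gb_nonneg hγ 0 le_rfl zero_le_one)
  · have hu : (0:ℝ) < u := lt_of_lt_of_le hw hwu
    have h1 : v/u ≤ v/w := div_le_div_of_nonneg_left hv hw hwu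
    have h2 : γ (v/w) ≤ γ (v/u) :=
      gb_anti hγ _ _ (div_nonneg hv hu.le) h1 ((div_le_one hw).2 hvw)
    have h3 : 0 ≤ γ (v/w) := gb_nonneg hγ _ (div_nonneg hv hw.le) ((div_le_one hw).2 hvw)
    nlinarith

lemma F_anti (hγ : MemGbar h α γ) {u w v : ℝ} (hv : 0 ≤ v) (hvw : v ≤ w) (hwu : w ≤ u) :
    u * γ (w/u) ≤ u * γ (v/u) := by
  rcases eq_or_lt_of_le ((hv.trans hvw).trans hwu) with hu | hu
  · rw [← hu]; simp
  · exact mul_le_mul_of_nonneg_left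
      (gb_anti hγ _ _ (div_nonneg hv hu.le) ((div_le_div_iff_of_pos_right hu).2 hvw)
        ((div_le_one hu).2 hwu)) hu.le

lemma F_diag_mono (hγ : MemGbar h α γ) {u v z : ℝ} (hv : 0 ≤ v) (hvu : v ≤ u) (hz : 0 ≤ z) :
    u * γ (v/u) ≤ (u+z) * γ ((v+z)/(u+z)) := by
  rcases eq_or_lt_of_le hvu with heq | hlt
  · rw [heq, F_diag_zero hγ (hv.trans hvu)]
    exact F_nonneg hγ (by linarith) (by linarith)
  · have hu : (0:ℝ) < u := lt_of_le_of_lt hv hlt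
    have huz : (0:ℝ) < u + z := by linarith
    have ha0 : 0 ≤ v/u := div_nonneg hv hu.le
    have hab : v/u ≤ (v+z)/(u+z) := by
      rw [div_le_div_iff₀ hu huz]
      nlinarith
    have hb1 : (v+z)/(u+z) < 1 := by
      rw [div_lt_one huz]; linarith
    have hmono := hγ.2.2 (v/u) ((v+z)/(u+z)) ha0 hab hb1
    have h1a : 1 - v/u = (u-v)/u := by field_simp
    have h1b : 1 - (v+z)/(u+z) = (u-v)/(u+z) := by field_simp; ring
    have huv : u - v ≠ 0 := by linarith
    have e1 : (u-v) * (γ (v/u)/(1 - v/u)) = u * γ (v/u) := by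
      rw [h1a]
      field_simp
    have e2 : (u-v) * (γ ((v+z)/(u+z))/(1 - (v+z)/(u+z))) = (u+z) * γ ((v+z)/(u+z)) := by
      rw [h1b]
      field_simp
    calc u * γ (v/u) = (u-v) * (γ (v/u)/(1 - v/u)) := e1.symm
    _ ≤ (u-v) * (γ ((v+z)/(u+z))/(1 - (v+z)/(u+z))) :=
        mul_le_mul_of_nonneg_left hmono (by linarith)
    _ = (u+z) * γ ((v+z)/(u+z)) := e2


lemma F_gam (hγ : MemGbar h α γ) {θ : ℝ} (hθ0 : 0 ≤ θ) (hθ1 : θ ≤ 1) :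
    Gam (fun u v => u * γ (v/u)) θ = γ θ := by
  have hev : ∀ᶠ (u:ℝ) in atTop,
      (fun u => (fun u v => u * γ (v/u)) u (θ*u) / u) u = (fun _ => γ θ) u := by
    filter_upwards [eventually_gt_atTop (0:ℝ)] with u hu
    show u * γ (θ*u/u) / u = γ θ
    rw [mul_div_cancel_right₀ θ (ne_of_gt hu), mul_div_cancel_left₀ (γ θ) (ne_of_gt hu)]
  rw [Gam, limsup_congr hev, limsup_const]

end part2

/-- The diagram commutes: `Γ ∘ Φ_h = Ω_h ∘ Γ` on `𝓑(α)`; in particular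
`Γ : 𝓑̄_h(α) → 𝓖̄_h(α)` is surjective. -/
theorem Gam_Phi_commutes (h α : ℝ) (hh : 0 ≤ h) (hhα : h ≤ α) :
    (∀ ψ : ℝ → ℝ → ℝ, MemBLip α ψ →
      ∀ θ, 0 ≤ θ → θ ≤ 1 → Gam (Phi h ψ) θ = Om h (Gam ψ) θ) ∧
    (∀ γ : ℝ → ℝ, MemGbar h α γ →
      ∃ ψ : ℝ → ℝ → ℝ, MemBbar h α ψ ∧ ∀ θ, 0 ≤ θ → θ ≤ 1 → Gam ψ θ = γ θ) := by
  have hα : 0 ≤ α := hh.trans hhα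
  constructor
  · intro ψ hψ θ hθ0 hθ1
    rcases eq_or_lt_of_le hθ1 with h1 | h1
    · rw [h1, gam_phi_one hψ hh hα]
      simp [Om]
    · exact le_antisymm (phiGam_le hψ hh hhα hθ0 h1) (om_le_phiGam hψ hh hhα hθ0 h1)
  · intro γ hγ
    refine ⟨fun u v => u * γ (v/u), ⟨⟨⟨?_, ?_, ?_, ?_, ?_⟩, ?_⟩, ?_, ?_⟩, ?_⟩
    · intro u hu; exact F_diag_zero hγ hu
    · intro u v hv hvu; exact F_nonneg hγ hv hvu
    · intro u w v hv hvw hwu; exact F_subadd hγ hv hvw hwu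
    · intro u w v hv hvw hwu; exact F_mono hγ hv hvw hwu
    · intro u w v hv hvw hwu; exact F_anti hγ hv hvw hwu
    · intro u v u' v' hv hvu hv' hv'u
      rcases le_total u' u with hc | hc
      · exact F_lip_one_sided hγ hα hv hvu hv' hv'u hc
      · rw [abs_sub_comm, abs_sub_comm u u', abs_sub_comm v v']
        exact F_lip_one_sided hγ hα hv' hv'u hv hvu hc
    · intro u v z hv hvu hz; exact F_diag_mono hγ hv hvu hz
    · intro u v hv hvu
      show h * (u - v) ≤ u * γ (0/u) - v * γ (0/v)
      rw [zero_div, zero_div]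
      nlinarith [mul_le_mul_of_nonneg_right hγ.2.1 (sub_nonneg.2 hvu)]
    · intro θ hθ0 hθ1; exact F_gam hγ hθ0 hθ1
end
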